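/- Suppose E : ℝ → ℝ satisfies E(X) ≤ (5/6)·E(X^{3/4}) + C·X^{1/2}·log X for all X ≥ X₀ (with E nonnegative and bounded on bounded sets, X₀ ≥ e). Then E(X) ≪ X^{1/2}·log X as X → ∞. -/
import Mathlib


open Real

theorem contraction_iteration (C X₀ : ℝ) (E : ℝ → ℝ)
    (hC : 0 < C) (hX₀ : Real.exp 1 ≤ X₀)
    (hnonneg : ∀ X, 0 ≤ E X)
    (hbdd : ∀ A : ℝ, ∃ B : ℝ, ∀ X ∈ Set.Icc X₀ A, E X ≤ B)
    (hcontr : ∀ X, X₀ ≤ X →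
      E X ≤ (5/6) * E (X ^ ((3:ℝ)/4)) + C * X ^ ((1:ℝ)/2) * Real.log X) :
    ∃ C' : ℝ, 0 < C' ∧ ∃ X₁ : ℝ, ∀ X, X₁ ≤ X →
      E X ≤ C' * X ^ ((1:ℝ)/2) * Real.log X := by
  obtain ⟨B, hB⟩ := hbdd (X₀ ^ ((4:ℝ)/3))
  have he : (1:ℝ) ≤ Real.exp 1 := by
    have := Real.add_one_le_exp (1:ℝ); linarith
  have hX₀1 : (1:ℝ) ≤ X₀ := le_trans he hX₀
  have hX₀0 : (0:ℝ) < X₀ := by linarith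
  have hX₀43 : X₀ ≤ X₀ ^ ((4:ℝ)/3) := by
    nth_rewrite 1 [← Real.rpow_one X₀]
    exact Real.rpow_le_rpow_of_exponent_le hX₀1 (by norm_num)
  have hB0 : 0 ≤ B := le_trans (hnonneg X₀) (hB X₀ ⟨le_refl _, hX₀43⟩)
  set C' := B + 8*C/3 with hC'
  have hC'0 : 0 < C' := by positivity
  refine ⟨C', hC'0, X₀, ?_⟩
  have hkey : ∀ X, X₀ ≤ X → 1 ≤ X ^ ((1:ℝ)/2) * Real.log X := by
    intro X hX
    have h1X : (1:ℝ) ≤ X := le_trans hX₀1 hX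
    have h1 : (1:ℝ) ≤ X ^ ((1:ℝ)/2) :=
      Real.one_le_rpow h1X (by norm_num)
    have h2 : (1:ℝ) ≤ Real.log X := by
      have := Real.log_le_log (Real.exp_pos 1) (le_trans hX₀ hX)
      rwa [Real.log_exp] at this
    nlinarith
  -- small case
  have hsmall : ∀ X, X₀ ≤ X → X ≤ X₀ ^ ((4:ℝ)/3) →
      E X ≤ C' * X ^ ((1:ℝ)/2) * Real.log X := by
    intro X h1 h2
    have hb := hB X ⟨h1, h2⟩
    have hk := hkey X h1
    have : B ≤ C' * (X ^ ((1:ℝ)/2) * Real.log X) := by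
      calc B ≤ C' := by simp [hC']; positivity
        _ = C' * 1 := (mul_one _).symm
        _ ≤ C' * (X ^ ((1:ℝ)/2) * Real.log X) := by
            exact mul_le_mul_of_nonneg_left hk hC'0.le
    linarith [this, hb]
  have main : ∀ n : ℕ, ∀ X, X₀ ≤ X → X ≤ X₀ ^ (((4:ℝ)/3)^n) →
      E X ≤ C' * X ^ ((1:ℝ)/2) * Real.log X := by
    intro n
    induction n with
    | zero =>
      intro X h1 h2
      exact hsmall X h1 (le_trans (by simpa using h2) hX₀43)
    | succ n ih =>
      intro X h1 h2
      by_cases hc : X ≤ X₀ ^ ((4:ℝ)/3)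
      · exact hsmall X h1 hc
      · push_neg at hc
        have hX0 : (0:ℝ) < X := lt_of_lt_of_le hX₀0 h1
        have h1X : (1:ℝ) ≤ X := le_trans hX₀1 h1
        set Y := X ^ ((3:ℝ)/4) with hYdef
        have hY1 : X₀ ≤ Y := by
          have h := Real.rpow_le_rpow (by positivity) hc.le (by norm_num : (0:ℝ) ≤ 3/4)
          rw [← Real.rpow_mul hX₀0.le] at h
          norm_num at h
          exact h
        have hY2 : Y ≤ X₀ ^ (((4:ℝ)/3)^n) := by
          have := Real.rpow_le_rpow hX0.le h2 (by norm_num : (0:ℝ) ≤ 3/4)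
          rw [← Real.rpow_mul hX₀0.le] at this
          have heq : ((4:ℝ)/3)^(n+1) * (3/4) = ((4:ℝ)/3)^n := by
            rw [pow_succ]; ring
          rwa [heq] at this
        have hIH := ih Y hY1 hY2
        have hlogY : Real.log Y = (3/4) * Real.log X := by
          rw [hYdef, Real.log_rpow hX0]
        have hYhalf : Y ^ ((1:ℝ)/2) = X ^ ((3:ℝ)/8) := by
          rw [hYdef, ← Real.rpow_mul hX0.le]; norm_num
        have hlogX : (0:ℝ) ≤ Real.log X := Real.log_nonneg h1X
        have h38 : X ^ ((3:ℝ)/8) ≤ X ^ ((1:ℝ)/2) :=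
          Real.rpow_le_rpow_of_exponent_le h1X (by norm_num)
        have hEY : E Y ≤ C' * X ^ ((1:ℝ)/2) * ((3/4) * Real.log X) := by
          rw [hlogY, hYhalf] at hIH
          calc E Y ≤ C' * X ^ ((3:ℝ)/8) * ((3/4) * Real.log X) := hIH
            _ ≤ C' * X ^ ((1:ℝ)/2) * ((3/4) * Real.log X) := by
                apply mul_le_mul_of_nonneg_right _ (by positivity)
                exact mul_le_mul_of_nonneg_left h38 hC'0.le
        have hcon := hcontr X h1
        have hpow : (0:ℝ) ≤ X ^ ((1:ℝ)/2) := by positivity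
        have hCC' : C ≤ (3/8) * C' := by
          rw [hC']; nlinarith
        calc E X ≤ (5/6) * E Y + C * X ^ ((1:ℝ)/2) * Real.log X := hcon
          _ ≤ (5/6) * (C' * X ^ ((1:ℝ)/2) * ((3/4) * Real.log X))
              + C * X ^ ((1:ℝ)/2) * Real.log X := by linarith
          _ = ((5/8) * C' + C) * (X ^ ((1:ℝ)/2) * Real.log X) := by ring
          _ ≤ C' * (X ^ ((1:ℝ)/2) * Real.log X) := by
              apply mul_le_mul_of_nonneg_right _ (by positivity)
              linarith
          _ = C' * X ^ ((1:ℝ)/2) * Real.log X := by ring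
  intro X hX
  have hX0 : (0:ℝ) < X := lt_of_lt_of_le hX₀0 hX
  obtain ⟨n, hn⟩ := pow_unbounded_of_one_lt (Real.log X) (by norm_num : (1:ℝ) < 4/3)
  apply main n X hX
  have hlog : Real.log X ≤ ((4:ℝ)/3)^n * Real.log X₀ := by
    have h2 : (1:ℝ) ≤ Real.log X₀ := by
      have := Real.log_le_log (Real.exp_pos 1) hX₀
      rwa [Real.log_exp] at this
    nlinarith [pow_pos (by norm_num : (0:ℝ) < 4/3) n]
  calc X = Real.exp (Real.log X) := (Real.exp_log hX0).symm
    _ ≤ Real.exp (((4:ℝ)/3)^n * Real.log X₀) := Real.exp_le_exp.mpr hlog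
    _ = X₀ ^ (((4:ℝ)/3)^n) := by
        rw [Real.rpow_def_of_pos hX₀0, mul_comm]
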